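/- Every finitely generated linear group is residually finite: if K is a field and Γ is a finitely generated subgroup of GL_n(K), then for every element g ∈ Γ with g ≠ 1 there exist a finite group Q and a group homomorphism φ : Γ → Q with φ(g) ≠ 1. -/

import Mathlib

/-!
The entries of finitely many generators of `Γ`, of their inverses, and the inverse of a nonzero
entry of `g - 1` generate a finitely generated ring `A ⊆ K`, and `Γ` embeds in `GL_n(A)`.
Since `ℤ` is a Jacobson ring, every residue field `A ⧸ m` of `A` at a maximal ideal is a field
of finite type over `ℤ`, hence finite (Zariski's lemma). Reducing modulo `m` gives a
homomorphism to the finite group `GL_n(A ⧸ m)`, and it does not kill `g` because the chosen entry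
of `g - 1` is a unit of `A`.
-/

theorem isJacobsonRing_of_jacobson_bot_eq_bot {R : Type*} [CommRing R] [Ring.DimensionLEOne R]
    (h : (⊥ : Ideal R).jacobson = ⊥) : IsJacobsonRing R := by
  refine isJacobsonRing_iff_prime_eq.mpr fun {P} hP => ?_
  rcases eq_or_ne P ⊥ with rfl | hP₀
  · exact h
  · have := hP.isMaximal hP₀
    exact Ideal.jacobson_eq_self_of_isMaximal

theorem Int.jacobson_bot_eq_bot : (⊥ : Ideal ℤ).jacobson = ⊥ := by
  refine eq_bot_iff.mpr fun x hx => ?_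
  rw [Ideal.mem_jacobson_bot] at hx
  -- `x + 1` and `1 - x` are both units, i.e. `±1`
  have h₁ := Int.isUnit_iff.mp (hx 1)
  have h₂ := Int.isUnit_iff.mp (hx (-1))
  rw [Submodule.mem_bot]
  omega

instance Int.isJacobsonRing : IsJacobsonRing ℤ :=
  isJacobsonRing_of_jacobson_bot_eq_bot Int.jacobson_bot_eq_bot

theorem finite_of_finiteType_int (F : Type*) [Field F] [Algebra ℤ F] [Algebra.FiniteType ℤ F] :
    Finite F := by
  have hfin := finite_of_finite_type_of_isJacobsonRing ℤ F
  have : Algebra.IsIntegral ℤ F := .of_finite ℤ F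
  -- otherwise `ℤ ⊆ F` would be an integral extension with `F` a field, making `ℤ` a field
  have hchar : ¬ Function.Injective (algebraMap ℤ F) := fun hinj =>
    Int.not_isField (isField_of_isIntegral_of_isField hinj (Field.toIsField F))
  obtain ⟨k, hk, hk₀⟩ : ∃ k : ℤ, algebraMap ℤ F k = 0 ∧ k ≠ 0 := by
    contrapose! hchar
    exact (injective_iff_map_eq_zero _).mpr hchar
  -- `hfin` concerns the module structure of `[Algebra ℤ F]`, not `AddCommGroup.toIntModule`
  refine @Module.finite_of_fg_torsion F _ Algebra.toModule hfin fun x =>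
    ⟨⟨k, mem_nonZeroDivisors_of_ne_zero hk₀⟩, ?_⟩
  exact (Algebra.smul_def k x).trans (by rw [hk, zero_mul])

theorem Ideal.finite_quotient_of_finiteType_int {A : Type*} [CommRing A] [Algebra ℤ A]
    [Algebra.FiniteType ℤ A] (m : Ideal A) [m.IsMaximal] : Finite (A ⧸ m) :=
  let := Ideal.Quotient.field m
  finite_of_finiteType_int (A ⧸ m)

theorem isUnit_of_coe_inv_mem {K C : Type*} [DivisionRing K] [SetLike C K] [SubmonoidClass C K]
    {S : C} {a : S} (ha : (a : K) ≠ 0) (h : (a : K)⁻¹ ∈ S) : IsUnit a :=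
  ⟨⟨a, ⟨_, h⟩, Subtype.ext (mul_inv_cancel₀ ha), Subtype.ext (inv_mul_cancel₀ ha)⟩, rfl⟩

theorem exists_finite_monoidHom_ne_one_of_finite {G H : Type*} [Group G] [Group H] [Finite H]
    (f : G →* H) {g : G} (hg : f g ≠ 1) :
    ∃ (Q : Type) (_ : Group Q) (_ : Finite Q) (φ : G →* Q), φ g ≠ 1 :=
  ⟨Shrink H, inferInstance, inferInstance, Shrink.mulEquiv.symm.toMonoidHom.comp f, by simpa⟩

theorem MonoidHom.exists_lift_of_le_range {G H : Type*} [Group G] [Group H] {f : G →* H}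
    (hf : Function.Injective f) {Γ : Subgroup H} (hΓ : Γ ≤ f.range) :
    ∃ ψ : Γ →* G, ∀ γ, f (ψ γ) = γ :=
  ⟨(ofInjective hf).symm.toMonoidHom.comp (Subgroup.inclusion hΓ),
    fun _ => congrArg Subtype.val ((ofInjective hf).apply_symm_apply _)⟩

namespace Matrix.GeneralLinearGroup

variable {n : Type*} [Fintype n] [DecidableEq n]

theorem map_injective {R S : Type*} [CommRing R] [CommRing S] {f : R →+* S}
    (hf : Function.Injective f) : Function.Injective (map (n := n) f) :=
  Units.map_injective (Matrix.map_injective hf)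

theorem map_sub_one_apply {R S : Type*} [CommRing R] [CommRing S] (f : R →+* S) (M : GL n R)
    (i j : n) : f ((M - 1 : Matrix n n R) i j) = (map f M - 1 : Matrix n n S) i j := by
  simp only [Matrix.sub_apply, map_sub, GeneralLinearGroup.map_apply, Matrix.one_apply,
    apply_ite f, map_one, map_zero]

theorem exists_sub_one_apply_ne_zero {R : Type*} [CommRing R] {M : GL n R} (hM : M ≠ 1) :
    ∃ i j, (M - 1 : Matrix n n R) i j ≠ 0 := by
  by_contra! h
  exact hM (Units.ext (sub_eq_zero.mp (Matrix.ext h)))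

theorem map_quotient_mk_ne_one {A : Type*} [CommRing A] {I : Ideal A} (hI : I ≠ ⊤) {M : GL n A}
    {i j : n} (h : IsUnit ((M - 1 : Matrix n n A) i j)) : map (Ideal.Quotient.mk I) M ≠ 1 := by
  intro hM
  have hmem : (M - 1 : Matrix n n A) i j ∈ I := by
    rw [← Ideal.Quotient.eq_zero_iff_mem, map_sub_one_apply, hM, Units.val_one, sub_self,
      Matrix.zero_apply]
  exact hI (I.eq_top_of_isUnit_mem hmem h)

theorem exists_finite_monoidHom_ne_one {A : Type*} [CommRing A] [Nontrivial A] [Algebra ℤ A]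
    [Algebra.FiniteType ℤ A] {M : GL n A} {i j : n} (h : IsUnit ((M - 1 : Matrix n n A) i j)) :
    ∃ (Q : Type) (_ : Group Q) (_ : Finite Q) (φ : GL n A →* Q), φ M ≠ 1 := by
  obtain ⟨m, hm⟩ := Ideal.exists_maximal A
  have := m.finite_quotient_of_finiteType_int
  exact exists_finite_monoidHom_ne_one_of_finite _ (map_quotient_mk_ne_one hm.ne_top h)

theorem mem_range_map_of_forall_mem {R K : Type*} [CommRing R] [CommRing K] [Algebra R K]
    (A : Subalgebra R K) {M : GL n K} (hM : ∀ i j, M i j ∈ A) (hM' : ∀ i j, M⁻¹ i j ∈ A) :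
    M ∈ (map (A.val : A →+* K)).range := by
  let ι : Matrix n n A →+* Matrix n n K := (A.val : A →+* K).mapMatrix
  have hι : Function.Injective ι := Matrix.map_injective Subtype.val_injective
  let N : Matrix n n A := fun i j => ⟨M i j, hM i j⟩
  let N' : Matrix n n A := fun i j => ⟨M⁻¹ i j, hM' i j⟩
  have hN : ι N = M := rfl
  have hN' : ι N' = ↑M⁻¹ := rfl
  refine ⟨⟨N, N', hι ?_, hι ?_⟩, Units.ext hN⟩
  · rw [map_mul, map_one, hN, hN', Units.mul_inv]
  · rw [map_mul, map_one, hN, hN', Units.inv_mul]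

theorem exists_fg_subalgebra_closure_le_range_map (R : Type*) {K : Type*} [CommRing R]
    [CommRing K] [Algebra R K] {T : Set (GL n K)} (hT : T.Finite) {S : Set K} (hS : S.Finite) :
    ∃ A : Subalgebra R K, A.FG ∧ S ⊆ A ∧
      Subgroup.closure T ≤ (map (A.val : A →+* K)).range := by
  let entries : GL n K → Set K := fun t =>
    Set.range (fun p : n × n => t p.1 p.2) ∪ Set.range (fun p : n × n => t⁻¹ p.1 p.2)
  let E := S ∪ ⋃ t ∈ T, entries t
  have hE : E.Finite :=
    hS.union (hT.biUnion fun _ _ => (Set.finite_range _).union (Set.finite_range _))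
  refine ⟨Algebra.adjoin R E, Subalgebra.fg_def.mpr ⟨E, hE, rfl⟩,
    fun x hx => Algebra.subset_adjoin (Or.inl hx), (Subgroup.closure_le _).mpr fun t ht => ?_⟩
  exact mem_range_map_of_forall_mem _
    (fun i j => Algebra.subset_adjoin (Or.inr (Set.mem_biUnion ht (Or.inl ⟨(i, j), rfl⟩))))
    (fun i j => Algebra.subset_adjoin (Or.inr (Set.mem_biUnion ht (Or.inr ⟨(i, j), rfl⟩))))

end Matrix.GeneralLinearGroup

/-- Malcev's theorem: every finitely generated linear group is residually
finite.  If `Γ` is a finitely generated subgroup of `GL_n(K)` for a field `K`,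
then for every `g ∈ Γ` with `g ≠ 1` there is a homomorphism from `Γ` to a
finite group not killing `g`. -/
theorem fg_linear_group_residually_finite (K : Type*) [Field K] (n : ℕ)
    (Γ : Subgroup (GL (Fin n) K)) (hfg : Group.FG Γ) :
    ∀ g : Γ, g ≠ 1 →
      ∃ (Q : Type) (_ : Group Q) (_ : Finite Q) (φ : Γ →* Q), φ g ≠ 1 := by
  intro g hg
  obtain ⟨T, hTΓ, hT⟩ := (Subgroup.fg_iff Γ).mp ((Group.fg_iff_subgroup_fg Γ).mp hfg)
  obtain ⟨i, j, hij⟩ :=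
    Matrix.GeneralLinearGroup.exists_sub_one_apply_ne_zero (M := g.1) fun h => hg (Subtype.ext h)
  obtain ⟨A, hA, haA, hΓA⟩ := Matrix.GeneralLinearGroup.exists_fg_subalgebra_closure_le_range_map
    ℤ hT (Set.finite_singleton ((g.1 - 1 : Matrix (Fin n) (Fin n) K) i j)⁻¹)
  have := (Subalgebra.fg_iff_finiteType A).mp hA
  obtain ⟨lift, hlift⟩ := MonoidHom.exists_lift_of_le_range
    (Matrix.GeneralLinearGroup.map_injective Subtype.val_injective) (hTΓ ▸ hΓA)
  have hcoe : (((lift g : GL (Fin n) A) - 1 : Matrix (Fin n) (Fin n) A) i j : K) =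
      (g.1 - 1 : Matrix (Fin n) (Fin n) K) i j := by
    rw [← hlift g]
    exact Matrix.GeneralLinearGroup.map_sub_one_apply (A.val : A →+* K) (lift g) i j
  have hunit := isUnit_of_coe_inv_mem (hcoe ▸ hij) (hcoe ▸ haA rfl)
  obtain ⟨Q, _, _, φ, hφ⟩ := Matrix.GeneralLinearGroup.exists_finite_monoidHom_ne_one hunit
  exact ⟨Q, inferInstance, inferInstance, φ.comp lift, hφ⟩
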